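/- Let α∈ℝ, α≠0, let f:ℝ→ℝ be smooth, and let V(q₁,q₂)=q₁^{4/α} f(q₂/q₁) on the open set {q₁>0}⊂ℝ⁴. Then the bivector P' = 2H·P + P̃ satisfies the Jacobi identity on {q₁>0}: for all indices i,j,k, Σ_l ( P'^{li} ∂P'^{jk}/∂x^l + P'^{lj} ∂P'^{ki}/∂x^l + P'^{lk} ∂P'^{ij}/∂x^l ) = 0; hence P' is an invariant Poisson bivector. -/

import Mathlib

open Real

noncomputable section

/-- Partial derivative of `F` in the `k`-th coordinate direction at `x`. -/
def pd (F : (Fin 4 → ℝ) → ℝ) (k : Fin 4) (x : Fin 4 → ℝ) : ℝ :=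
  fderiv ℝ F x (Pi.single k 1)

/-- The canonical Poisson bivector on ℝ⁴. -/
def Pcan : Matrix (Fin 4) (Fin 4) ℝ :=
  !![0, 0, 1, 0; 0, 0, 0, 1; -1, 0, 0, 0; 0, -1, 0, 0]

/-- Lie derivative of a bivector field `T` along a vector field `Xf`:
`(L_X T)^{ij} = Σ_k ( X^k ∂T^{ij}/∂x^k − T^{kj} ∂X^i/∂x^k − T^{ik} ∂X^j/∂x^k )`. -/
def lieDerivBiv (Xf : (Fin 4 → ℝ) → Fin 4 → ℝ)
    (T : (Fin 4 → ℝ) → Matrix (Fin 4) (Fin 4) ℝ)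
    (i j : Fin 4) (x : Fin 4 → ℝ) : ℝ :=
  ∑ k, (Xf x k * pd (fun y => T y i j) k x
      - T x k j * pd (fun y => Xf y i) k x
      - T x i k * pd (fun y => Xf y j) k x)

/-- Lie derivative of a 2-form `ω` along a vector field `Xf`:
`(L_X ω)_{ij} = Σ_k ( X^k ∂ω_{ij}/∂x^k + ω_{kj} ∂X^k/∂x^i + ω_{ik} ∂X^k/∂x^j )`. -/
def lieDerivForm (Xf : (Fin 4 → ℝ) → Fin 4 → ℝ)
    (ω : (Fin 4 → ℝ) → Matrix (Fin 4) (Fin 4) ℝ)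
    (i j : Fin 4) (x : Fin 4 → ℝ) : ℝ :=
  ∑ k, (Xf x k * pd (fun y => ω y i j) k x
      + ω x k j * pd (fun y => Xf y k) i x
      + ω x i k * pd (fun y => Xf y k) j x)

/-- The Jacobiator of a bivector field `A`; `A` satisfies the Jacobi identity iff it
vanishes for all indices `i j k`. -/
def jac (A : (Fin 4 → ℝ) → Matrix (Fin 4) (Fin 4) ℝ)
    (i j k : Fin 4) (x : Fin 4 → ℝ) : ℝ :=
  ∑ l, (A x l i * pd (fun y => A y j k) l x
      + A x l j * pd (fun y => A y k i) l x
      + A x l k * pd (fun y => A y i j) l x)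

/-- The mixed Schouten bracket expression of two bivector fields `A` and `B`. -/
def mixedSchouten (A B : (Fin 4 → ℝ) → Matrix (Fin 4) (Fin 4) ℝ)
    (i j k : Fin 4) (x : Fin 4 → ℝ) : ℝ :=
  ∑ l, (A x l i * pd (fun y => B y j k) l x
      + A x l j * pd (fun y => B y k i) l x
      + A x l k * pd (fun y => B y i j) l x
      + B x l i * pd (fun y => A y j k) l x
      + B x l j * pd (fun y => A y k i) l x
      + B x l k * pd (fun y => A y i j) l x)

/-- The weight-homogeneous potential `V = q₁^{4/α} f(q₂/q₁)` (real power, for `q₁ > 0`). -/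
def Vw (α : ℝ) (f : ℝ → ℝ) (x : Fin 4 → ℝ) : ℝ := (x 0) ^ ((4 : ℝ) / α) * f (x 1 / x 0)

/-- The Hamiltonian `H = (p₁² + p₂²)/2 + V`. -/
def Hw (α : ℝ) (f : ℝ → ℝ) (x : Fin 4 → ℝ) : ℝ := ((x 2) ^ 2 + (x 3) ^ 2) / 2 + Vw α f x

/-- The Hamiltonian vector field `X = (p₁, p₂, −∂V/∂q₁, −∂V/∂q₂)`. -/
def Xw (α : ℝ) (f : ℝ → ℝ) (x : Fin 4 → ℝ) : Fin 4 → ℝ :=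
  ![x 2, x 3, -(pd (Vw α f) 0 x), -(pd (Vw α f) 1 x)]

/-- The invariant bivector `P̃` associated with the weight-homogeneous potential. -/
def Ptw (α : ℝ) (f : ℝ → ℝ) (x : Fin 4 → ℝ) : Matrix (Fin 4) (Fin 4) ℝ :=
  let q1 := x 0; let q2 := x 1; let p1 := x 2; let p2 := x 3
  let V1 := pd (Vw α f) 0 x
  let V2 := pd (Vw α f) 1 x
  let v := Vw α f x
  let e12 := α * (p1 * q2 - p2 * q1)
  let e13 := p1 ^ 2 - p2 ^ 2 - α * q2 * V2 + 2 * v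
  let e14 := 2 * p1 * p2 + α * q1 * V2
  let e23 := 2 * p1 * p2 + α * q2 * V1
  let e24 := -e13
  let e34 := 2 * p1 * V2 - 2 * p2 * V1
  !![0, e12, e13, e14;
     -(e12), 0, e23, e24;
     -(e13), -(e23), 0, e34;
     -(e14), -(e24), -(e34), 0]

/-- The bivector `P' = 2H·P + P̃`. -/
def Pw' (α : ℝ) (f : ℝ → ℝ) (x : Fin 4 → ℝ) : Matrix (Fin 4) (Fin 4) ℝ :=
  Matrix.of fun i j => 2 * Hw α f x * Pcan i j + Ptw α f x i j

/-- linear map -/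

def lin (c : Fin 4 → ℝ) : (Fin 4 → ℝ) →L[ℝ] ℝ :=
  ∑ i, c i • ContinuousLinearMap.proj i

lemma lin_apply (c v : Fin 4 → ℝ) : lin c v = ∑ i, c i * v i := by
  simp [lin]

lemma lin_single (c : Fin 4 → ℝ) (k : Fin 4) : lin c (Pi.single k 1) = c k := by
  rw [lin_apply]
  simp [Pi.single_apply]

lemma lin_add (c d : Fin 4 → ℝ) : lin (c + d) = lin c + lin d := by
  simp [lin, add_smul, Finset.sum_add_distrib]

lemma lin_smul (r : ℝ) (c : Fin 4 → ℝ) : lin (r • c) = r • lin c := by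
  simp [lin, Finset.smul_sum, smul_smul]

lemma lin_neg (c : Fin 4 → ℝ) : lin (-c) = -(lin c) := by
  have : (-c) = (-1 : ℝ) • c := by funext i; simp
  rw [this, lin_smul]
  exact neg_one_smul ℝ (lin c)

def HasPD (F : (Fin 4 → ℝ) → ℝ) (c : Fin 4 → ℝ) (x : Fin 4 → ℝ) : Prop :=
  HasFDerivAt F (lin c) x

lemma HasPD.pd_eq {F c x} (h : HasPD F c x) (k : Fin 4) : pd F k x = c k := by
  rw [pd, h.fderiv, lin_single]

lemma HasPD.congr {F c x} (h : HasPD F c x) {d : Fin 4 → ℝ} (e : ∀ i, d i = c i) :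
    HasPD F d x := by
  have : d = c := funext e
  rwa [this]

lemma hasPD_proj (i : Fin 4) (x : Fin 4 → ℝ) : HasPD (fun y => y i) (Pi.single i 1) x := by
  have h : lin (Pi.single i (1:ℝ)) = ContinuousLinearMap.proj i := by
    refine ContinuousLinearMap.ext fun v => ?_
    rw [lin_apply]; simp [Pi.single_apply]
  unfold HasPD
  rw [h]
  exact hasFDerivAt_apply i x

lemma hasPD_const (r : ℝ) (x : Fin 4 → ℝ) : HasPD (fun _ => r) 0 x := by
  unfold HasPD
  have : lin (0 : Fin 4 → ℝ) = 0 := by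
    refine ContinuousLinearMap.ext fun v => ?_
    rw [lin_apply]; simp
  rw [this]
  exact hasFDerivAt_const r x

lemma HasPD.add {F G c d x} (hF : HasPD F c x) (hG : HasPD G d x) :
    HasPD (fun y => F y + G y) (c + d) x := by
  unfold HasPD; rw [lin_add]; exact HasFDerivAt.add hF hG

lemma HasPD.sub {F G c d x} (hF : HasPD F c x) (hG : HasPD G d x) :
    HasPD (fun y => F y - G y) (c - d) x := by
  unfold HasPD
  have : lin (c - d) = lin c - lin d := by
    have : c - d = c + (-d) := by ring
    rw [this, lin_add, lin_neg]; abel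
  rw [this]; exact HasFDerivAt.sub hF hG

lemma HasPD.neg {F c x} (hF : HasPD F c x) : HasPD (fun y => -(F y)) (-c) x := by
  unfold HasPD; rw [lin_neg]; exact HasFDerivAt.neg hF

lemma HasPD.mul {F G c d x} (hF : HasPD F c x) (hG : HasPD G d x) :
    HasPD (fun y => F y * G y) (F x • d + G x • c) x := by
  unfold HasPD
  rw [lin_add, lin_smul, lin_smul]
  exact HasFDerivAt.mul hF hG

lemma HasPD.const_mul {F c x} (hF : HasPD F c x) (r : ℝ) :
    HasPD (fun y => r * F y) (r • c) x := by
  unfold HasPD; rw [lin_smul]; exact HasFDerivAt.const_mul hF r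

lemma HasPD.comp {F c x} (hF : HasPD F c x) {g : ℝ → ℝ} {g' : ℝ}
    (hg : HasDerivAt g g' (F x)) : HasPD (fun y => g (F y)) (g' • c) x := by
  unfold HasPD; rw [lin_smul]
  exact hg.comp_hasFDerivAt x hF

lemma HasPD.div {F G c d x} (hF : HasPD F c x) (hG : HasPD G d x) (h0 : G x ≠ 0) :
    HasPD (fun y => F y / G y) (F x • ((-(G x ^ 2)⁻¹) • d) + (G x)⁻¹ • c) x := by
  have hGi : HasPD (fun y => (G y)⁻¹) ((-(G x ^ 2)⁻¹) • d) x := hG.comp (hasDerivAt_inv h0)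
  have := hF.mul hGi
  simpa [div_eq_mul_inv] using this

lemma pd_congr {F G : (Fin 4 → ℝ) → ℝ} {x} (h : F =ᶠ[nhds x] G) (k : Fin 4) :
    pd F k x = pd G k x := by
  unfold pd; rw [h.fderiv_eq]

lemma pd_fun_neg (F : (Fin 4 → ℝ) → ℝ) (k : Fin 4) (x) :
    pd (fun y => -(F y)) k x = -(pd F k x) := by
  unfold pd; rw [fderiv_fun_neg]; simp

def G1 (α : ℝ) (f : ℝ → ℝ) (x : Fin 4 → ℝ) : ℝ :=
  4 / α * (x 0 ^ ((4:ℝ)/α)) * f (x 1 / x 0) / x 0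
    - x 1 * (x 0 ^ ((4:ℝ)/α)) * deriv f (x 1 / x 0) / (x 0 * x 0)

def G2 (α : ℝ) (f : ℝ → ℝ) (x : Fin 4 → ℝ) : ℝ :=
  (x 0 ^ ((4:ℝ)/α)) * deriv f (x 1 / x 0) / x 0

def E01 (α : ℝ) (f : ℝ → ℝ) (x : Fin 4 → ℝ) : ℝ := α * (x 2 * x 1 - x 3 * x 0)
def E02 (α : ℝ) (f : ℝ → ℝ) (x : Fin 4 → ℝ) : ℝ := 2 * (x 2 * x 2) + 4 * Vw α f x - α * x 1 * G2 α f x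
def E03 (α : ℝ) (f : ℝ → ℝ) (x : Fin 4 → ℝ) : ℝ := 2 * (x 2 * x 3) + α * x 0 * G2 α f x
def E12 (α : ℝ) (f : ℝ → ℝ) (x : Fin 4 → ℝ) : ℝ := 2 * (x 2 * x 3) + α * x 1 * G1 α f x
def E13 (α : ℝ) (f : ℝ → ℝ) (x : Fin 4 → ℝ) : ℝ := 2 * (x 3 * x 3) + α * x 1 * G2 α f x
def E23 (α : ℝ) (f : ℝ → ℝ) (x : Fin 4 → ℝ) : ℝ := 2 * (x 2 * G2 α f x) - 2 * (x 3 * G1 α f x)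

def Emat (α : ℝ) (f : ℝ → ℝ) (x : Fin 4 → ℝ) : Matrix (Fin 4) (Fin 4) ℝ :=
  !![0, E01 α f x, E02 α f x, E03 α f x;
     -(E01 α f x), 0, E12 α f x, E13 α f x;
     -(E02 α f x), -(E12 α f x), 0, E23 α f x;
     -(E03 α f x), -(E13 α f x), -(E23 α f x), 0]

section
variable {α : ℝ} (hα : α ≠ 0) {f : ℝ → ℝ} (hf : ContDiff ℝ (⊤ : ℕ∞) f)
  {x : Fin 4 → ℝ} (hx : 0 < x 0)
include hα hf hx

set_option maxHeartbeats 2000000 in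
lemma hasPD_Vw : HasPD (Vw α f) ![(G1 α f x), (G2 α f x), (0:ℝ), (0:ℝ)] x := by
  have hdf : HasDerivAt f (deriv f (x 1 / x 0)) (x 1 / x 0) :=
    ((hf.differentiable (by simp)) (x 1 / x 0)).hasDerivAt
  have hw := (hasPD_proj 0 x).comp (Real.hasDerivAt_rpow_const (p := (4:ℝ)/α) (Or.inl hx.ne'))
  have hu := (hasPD_proj 1 x).div (hasPD_proj 0 x) hx.ne'
  have hF := hu.comp hdf
  refine (hw.mul hF).congr ?_
  intro i
  fin_cases i <;>
    (try simp (config := { decide := true }) [G1, G2, Pi.add_apply, Pi.smul_apply, Pi.sub_apply, smul_eq_mul, Pi.single_apply, Matrix.vecHead, Matrix.vecTail, Function.comp, Fin.ext_iff, Fin.val_succ]) <;>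
    (try rw [Real.rpow_sub hx, Real.rpow_one]) <;>
    (try field_simp) <;> (first | ring1 | tauto | simp | (left; ring1) | (right; ring1))

set_option maxHeartbeats 2000000 in
lemma hasPD_G1 : HasPD (G1 α f)
    ![((x 1) * (x 1) * (x 0 ^ ((4:ℝ)/α)) * (deriv (deriv f) (x 1 / x 0)) / ((x 0) * (x 0) * (x 0) * (x 0)) + 2 * (x 1) * (x 0 ^ ((4:ℝ)/α)) * (deriv f (x 1 / x 0)) / ((x 0) * (x 0) * (x 0)) - 2 * (x 1) * (x 0 ^ ((4:ℝ)/α)) * (deriv f (x 1 / x 0)) * ((4/α)) / ((x 0) * (x 0) * (x 0)) - (x 0 ^ ((4:ℝ)/α)) * (f (x 1 / x 0)) * ((4/α)) / ((x 0) * (x 0)) + (x 0 ^ ((4:ℝ)/α)) * (f (x 1 / x 0)) * ((4/α)) * ((4/α)) / ((x 0) * (x 0))),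
      (-(x 1) * (x 0 ^ ((4:ℝ)/α)) * (deriv (deriv f) (x 1 / x 0)) / ((x 0) * (x 0) * (x 0)) - (x 0 ^ ((4:ℝ)/α)) * (deriv f (x 1 / x 0)) / ((x 0) * (x 0)) + (x 0 ^ ((4:ℝ)/α)) * (deriv f (x 1 / x 0)) * ((4/α)) / ((x 0) * (x 0))),
      (0:ℝ),
      (0:ℝ)] x := by
  have hf' : ContDiff ℝ (⊤:ℕ∞) (deriv f) := (contDiff_infty_iff_deriv.mp (hf.of_le (by simp))).2
  have hdf : HasDerivAt f (deriv f (x 1 / x 0)) (x 1 / x 0) :=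
    ((hf.differentiable (by simp)) (x 1 / x 0)).hasDerivAt
  have hddf : HasDerivAt (deriv f) (deriv (deriv f) (x 1 / x 0)) (x 1 / x 0) :=
    ((hf'.differentiable (by simp)) (x 1 / x 0)).hasDerivAt
  have hw := (hasPD_proj 0 x).comp (Real.hasDerivAt_rpow_const (p := (4:ℝ)/α) (Or.inl hx.ne'))
  have hu := (hasPD_proj 1 x).div (hasPD_proj 0 x) hx.ne'
  have hF := hu.comp hdf
  have hF1 := hu.comp hddf
  have hx2 : x 0 * x 0 ≠ 0 := mul_ne_zero hx.ne' hx.ne'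
  refine (((((hasPD_const (4/α) x).mul hw).mul hF).div (hasPD_proj 0 x) hx.ne').sub
    ((((hasPD_proj 1 x).mul hw).mul hF1).div ((hasPD_proj 0 x).mul (hasPD_proj 0 x)) hx2)).congr ?_
  intro i
  fin_cases i <;>
    (try simp (config := { decide := true }) [Pi.add_apply, Pi.smul_apply, Pi.sub_apply, smul_eq_mul, Pi.single_apply, Matrix.vecHead, Matrix.vecTail, Function.comp, Fin.ext_iff, Fin.val_succ]) <;>
    (try rw [Real.rpow_sub hx, Real.rpow_one]) <;>
    (try field_simp) <;> (first | ring1 | tauto | simp | (left; ring1) | (right; ring1))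

set_option maxHeartbeats 2000000 in
lemma hasPD_G2 : HasPD (G2 α f)
    ![(-(x 1) * (x 0 ^ ((4:ℝ)/α)) * (deriv (deriv f) (x 1 / x 0)) / ((x 0) * (x 0) * (x 0)) - (x 0 ^ ((4:ℝ)/α)) * (deriv f (x 1 / x 0)) / ((x 0) * (x 0)) + (x 0 ^ ((4:ℝ)/α)) * (deriv f (x 1 / x 0)) * ((4/α)) / ((x 0) * (x 0))),
      ((x 0 ^ ((4:ℝ)/α)) * (deriv (deriv f) (x 1 / x 0)) / ((x 0) * (x 0))),
      (0:ℝ),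
      (0:ℝ)] x := by
  have hf' : ContDiff ℝ (⊤:ℕ∞) (deriv f) := (contDiff_infty_iff_deriv.mp (hf.of_le (by simp))).2
  have hddf : HasDerivAt (deriv f) (deriv (deriv f) (x 1 / x 0)) (x 1 / x 0) :=
    ((hf'.differentiable (by simp)) (x 1 / x 0)).hasDerivAt
  have hw := (hasPD_proj 0 x).comp (Real.hasDerivAt_rpow_const (p := (4:ℝ)/α) (Or.inl hx.ne'))
  have hu := (hasPD_proj 1 x).div (hasPD_proj 0 x) hx.ne'
  have hF1 := hu.comp hddf
  refine ((hw.mul hF1).div (hasPD_proj 0 x) hx.ne').congr ?_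
  intro i
  fin_cases i <;>
    (try simp (config := { decide := true }) [Pi.add_apply, Pi.smul_apply, Pi.sub_apply, smul_eq_mul, Pi.single_apply, Matrix.vecHead, Matrix.vecTail, Function.comp, Fin.ext_iff, Fin.val_succ]) <;>
    (try rw [Real.rpow_sub hx, Real.rpow_one]) <;>
    (try field_simp) <;> (first | ring1 | tauto | simp | (left; ring1) | (right; ring1))

set_option maxHeartbeats 2000000 in
lemma hasPD_E01 : HasPD (E01 α f)
    ![(-(x 3) * (α)),
      ((x 2) * (α)),
      ((x 1) * (α)),
      (-(x 0) * (α))] x := by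
  refine (((((hasPD_proj 2 x).mul (hasPD_proj 1 x)).sub ((hasPD_proj 3 x).mul (hasPD_proj 0 x))).const_mul α)).congr ?_
  intro i
  fin_cases i <;>
    (try simp (config := { decide := true }) [G1, G2, Vw, Pi.add_apply, Pi.smul_apply, Pi.sub_apply, smul_eq_mul, Pi.single_apply, Matrix.vecHead, Matrix.vecTail, Function.comp, Fin.ext_iff, Fin.val_succ]) <;>
    (try field_simp) <;> (first | ring1 | tauto | simp | (left; ring1) | (right; ring1))

set_option maxHeartbeats 2000000 in
lemma hasPD_E02 : HasPD (E02 α f)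
    ![((x 1) * (x 1) * (x 0 ^ ((4:ℝ)/α)) * (deriv (deriv f) (x 1 / x 0)) * (α) / ((x 0) * (x 0) * (x 0)) - 4 * (x 1) * (x 0 ^ ((4:ℝ)/α)) * (deriv f (x 1 / x 0)) / ((x 0) * (x 0)) + (x 1) * (x 0 ^ ((4:ℝ)/α)) * (deriv f (x 1 / x 0)) * (α) / ((x 0) * (x 0)) - (x 1) * (x 0 ^ ((4:ℝ)/α)) * (deriv f (x 1 / x 0)) * ((4/α)) * (α) / ((x 0) * (x 0)) + 4 * (x 0 ^ ((4:ℝ)/α)) * (f (x 1 / x 0)) * ((4/α)) / ((x 0))),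
      (-(x 1) * (x 0 ^ ((4:ℝ)/α)) * (deriv (deriv f) (x 1 / x 0)) * (α) / ((x 0) * (x 0)) + 4 * (x 0 ^ ((4:ℝ)/α)) * (deriv f (x 1 / x 0)) / ((x 0)) - (x 0 ^ ((4:ℝ)/α)) * (deriv f (x 1 / x 0)) * (α) / ((x 0))),
      (4 * (x 2)),
      (0:ℝ)] x := by
  refine ((((((hasPD_proj 2 x).mul (hasPD_proj 2 x)).const_mul 2).add ((hasPD_Vw hα hf hx).const_mul 4)).sub ((((hasPD_proj 1 x).const_mul α).mul (hasPD_G2 hα hf hx))))).congr ?_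
  intro i
  fin_cases i <;>
    (try simp (config := { decide := true }) [G1, G2, Vw, Pi.add_apply, Pi.smul_apply, Pi.sub_apply, smul_eq_mul, Pi.single_apply, Matrix.vecHead, Matrix.vecTail, Function.comp, Fin.ext_iff, Fin.val_succ]) <;>
    (try field_simp) <;> (first | ring1 | tauto | simp | (left; ring1) | (right; ring1))

set_option maxHeartbeats 2000000 in
lemma hasPD_E03 : HasPD (E03 α f)
    ![(-(x 1) * (x 0 ^ ((4:ℝ)/α)) * (deriv (deriv f) (x 1 / x 0)) * (α) / ((x 0) * (x 0)) + (x 0 ^ ((4:ℝ)/α)) * (deriv f (x 1 / x 0)) * ((4/α)) * (α) / ((x 0))),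
      ((x 0 ^ ((4:ℝ)/α)) * (deriv (deriv f) (x 1 / x 0)) * (α) / ((x 0))),
      (2 * (x 3)),
      (2 * (x 2))] x := by
  refine ((((((hasPD_proj 2 x).mul (hasPD_proj 3 x)).const_mul 2).add ((((hasPD_proj 0 x).const_mul α).mul (hasPD_G2 hα hf hx)))))).congr ?_
  intro i
  fin_cases i <;>
    (try simp (config := { decide := true }) [G1, G2, Vw, Pi.add_apply, Pi.smul_apply, Pi.sub_apply, smul_eq_mul, Pi.single_apply, Matrix.vecHead, Matrix.vecTail, Function.comp, Fin.ext_iff, Fin.val_succ]) <;>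
    (try field_simp) <;> (first | ring1 | tauto | simp | (left; ring1) | (right; ring1))

set_option maxHeartbeats 2000000 in
lemma hasPD_E12 : HasPD (E12 α f)
    ![((x 1) * (x 1) * (x 1) * (x 0 ^ ((4:ℝ)/α)) * (deriv (deriv f) (x 1 / x 0)) * (α) / ((x 0) * (x 0) * (x 0) * (x 0)) + 2 * (x 1) * (x 1) * (x 0 ^ ((4:ℝ)/α)) * (deriv f (x 1 / x 0)) * (α) / ((x 0) * (x 0) * (x 0)) - 2 * (x 1) * (x 1) * (x 0 ^ ((4:ℝ)/α)) * (deriv f (x 1 / x 0)) * ((4/α)) * (α) / ((x 0) * (x 0) * (x 0)) - (x 1) * (x 0 ^ ((4:ℝ)/α)) * (f (x 1 / x 0)) * ((4/α)) * (α) / ((x 0) * (x 0)) + (x 1) * (x 0 ^ ((4:ℝ)/α)) * (f (x 1 / x 0)) * ((4/α)) * ((4/α)) * (α) / ((x 0) * (x 0))),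
      (-(x 1) * (x 1) * (x 0 ^ ((4:ℝ)/α)) * (deriv (deriv f) (x 1 / x 0)) * (α) / ((x 0) * (x 0) * (x 0)) - 2 * (x 1) * (x 0 ^ ((4:ℝ)/α)) * (deriv f (x 1 / x 0)) * (α) / ((x 0) * (x 0)) + (x 1) * (x 0 ^ ((4:ℝ)/α)) * (deriv f (x 1 / x 0)) * ((4/α)) * (α) / ((x 0) * (x 0)) + (x 0 ^ ((4:ℝ)/α)) * (f (x 1 / x 0)) * ((4/α)) * (α) / ((x 0))),
      (2 * (x 3)),
      (2 * (x 2))] x := by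
  refine ((((((hasPD_proj 2 x).mul (hasPD_proj 3 x)).const_mul 2).add ((((hasPD_proj 1 x).const_mul α).mul (hasPD_G1 hα hf hx)))))).congr ?_
  intro i
  fin_cases i <;>
    (try simp (config := { decide := true }) [G1, G2, Vw, Pi.add_apply, Pi.smul_apply, Pi.sub_apply, smul_eq_mul, Pi.single_apply, Matrix.vecHead, Matrix.vecTail, Function.comp, Fin.ext_iff, Fin.val_succ]) <;>
    (try field_simp) <;> (first | ring1 | tauto | simp | (left; ring1) | (right; ring1))

set_option maxHeartbeats 2000000 in
lemma hasPD_E13 : HasPD (E13 α f)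
    ![(-(x 1) * (x 1) * (x 0 ^ ((4:ℝ)/α)) * (deriv (deriv f) (x 1 / x 0)) * (α) / ((x 0) * (x 0) * (x 0)) - (x 1) * (x 0 ^ ((4:ℝ)/α)) * (deriv f (x 1 / x 0)) * (α) / ((x 0) * (x 0)) + (x 1) * (x 0 ^ ((4:ℝ)/α)) * (deriv f (x 1 / x 0)) * ((4/α)) * (α) / ((x 0) * (x 0))),
      ((x 1) * (x 0 ^ ((4:ℝ)/α)) * (deriv (deriv f) (x 1 / x 0)) * (α) / ((x 0) * (x 0)) + (x 0 ^ ((4:ℝ)/α)) * (deriv f (x 1 / x 0)) * (α) / ((x 0))),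
      (0:ℝ),
      (4 * (x 3))] x := by
  refine ((((((hasPD_proj 3 x).mul (hasPD_proj 3 x)).const_mul 2).add ((((hasPD_proj 1 x).const_mul α).mul (hasPD_G2 hα hf hx)))))).congr ?_
  intro i
  fin_cases i <;>
    (try simp (config := { decide := true }) [G1, G2, Vw, Pi.add_apply, Pi.smul_apply, Pi.sub_apply, smul_eq_mul, Pi.single_apply, Matrix.vecHead, Matrix.vecTail, Function.comp, Fin.ext_iff, Fin.val_succ]) <;>
    (try field_simp) <;> (first | ring1 | tauto | simp | (left; ring1) | (right; ring1))

set_option maxHeartbeats 2000000 in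
lemma hasPD_E23 : HasPD (E23 α f)
    ![(-2 * (x 1) * (x 1) * (x 3) * (x 0 ^ ((4:ℝ)/α)) * (deriv (deriv f) (x 1 / x 0)) / ((x 0) * (x 0) * (x 0) * (x 0)) - 4 * (x 1) * (x 3) * (x 0 ^ ((4:ℝ)/α)) * (deriv f (x 1 / x 0)) / ((x 0) * (x 0) * (x 0)) + 4 * (x 1) * (x 3) * (x 0 ^ ((4:ℝ)/α)) * (deriv f (x 1 / x 0)) * ((4/α)) / ((x 0) * (x 0) * (x 0)) - 2 * (x 1) * (x 2) * (x 0 ^ ((4:ℝ)/α)) * (deriv (deriv f) (x 1 / x 0)) / ((x 0) * (x 0) * (x 0)) + 2 * (x 3) * (x 0 ^ ((4:ℝ)/α)) * (f (x 1 / x 0)) * ((4/α)) / ((x 0) * (x 0)) - 2 * (x 3) * (x 0 ^ ((4:ℝ)/α)) * (f (x 1 / x 0)) * ((4/α)) * ((4/α)) / ((x 0) * (x 0)) - 2 * (x 2) * (x 0 ^ ((4:ℝ)/α)) * (deriv f (x 1 / x 0)) / ((x 0) * (x 0)) + 2 * (x 2) * (x 0 ^ ((4:ℝ)/α)) * (deriv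 f (x 1 / x 0)) * ((4/α)) / ((x 0) * (x 0))),
      (2 * (x 1) * (x 3) * (x 0 ^ ((4:ℝ)/α)) * (deriv (deriv f) (x 1 / x 0)) / ((x 0) * (x 0) * (x 0)) + 2 * (x 3) * (x 0 ^ ((4:ℝ)/α)) * (deriv f (x 1 / x 0)) / ((x 0) * (x 0)) - 2 * (x 3) * (x 0 ^ ((4:ℝ)/α)) * (deriv f (x 1 / x 0)) * ((4/α)) / ((x 0) * (x 0)) + 2 * (x 2) * (x 0 ^ ((4:ℝ)/α)) * (deriv (deriv f) (x 1 / x 0)) / ((x 0) * (x 0))),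
      (2 * (x 0 ^ ((4:ℝ)/α)) * (deriv f (x 1 / x 0)) / ((x 0))),
      (2 * (x 1) * (x 0 ^ ((4:ℝ)/α)) * (deriv f (x 1 / x 0)) / ((x 0) * (x 0)) - 2 * (x 0 ^ ((4:ℝ)/α)) * (f (x 1 / x 0)) * ((4/α)) / ((x 0)))] x := by
  refine ((((((hasPD_proj 2 x).mul (hasPD_G2 hα hf hx)).const_mul 2).sub ((((hasPD_proj 3 x).mul (hasPD_G1 hα hf hx)).const_mul 2))))).congr ?_
  intro i
  fin_cases i <;>
    (try simp (config := { decide := true }) [G1, G2, Vw, Pi.add_apply, Pi.smul_apply, Pi.sub_apply, smul_eq_mul, Pi.single_apply, Matrix.vecHead, Matrix.vecTail, Function.comp, Fin.ext_iff, Fin.val_succ]) <;>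
    (try field_simp) <;> (first | ring1 | tauto | simp | (left; ring1) | (right; ring1))

end

section
variable {α : ℝ} (hα : α ≠ 0) {f : ℝ → ℝ} (hf : ContDiff ℝ (⊤ : ℕ∞) f)
include hα hf

set_option maxHeartbeats 1000000 in
lemma Pw'_eq (x : Fin 4 → ℝ) (hx : 0 < x 0) : Pw' α f x = Emat α f x := by
  have h0 : pd (Vw α f) 0 x = G1 α f x := by
    have := (hasPD_Vw hα hf hx).pd_eq 0; simpa using this
  have h1 : pd (Vw α f) 1 x = G2 α f x := by
    have := (hasPD_Vw hα hf hx).pd_eq 1; simpa using this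
  ext i j
  fin_cases i <;> fin_cases j <;>
    simp [Pw', Emat, Ptw, Pcan, Hw, E01, E02, E03, E12, E13, E23, h0, h1,
      Matrix.vecHead, Matrix.vecTail, Function.comp] <;>
    (try ring1)

end

lemma skewP (α : ℝ) (f : ℝ → ℝ) (y : Fin 4 → ℝ) (i j : Fin 4) :
    Pw' α f y j i = -(Pw' α f y i j) := by
  fin_cases i <;> fin_cases j <;>
    simp [Pw', Ptw, Pcan, Matrix.vecHead, Matrix.vecTail, Function.comp] <;> (try ring1)

lemma fskewP (α : ℝ) (f : ℝ → ℝ) (i j : Fin 4) :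
    (fun y => Pw' α f y i j) = (fun y => -(Pw' α f y j i)) :=
  funext fun y => by rw [skewP α f y j i]

lemma jac_swap12 (α : ℝ) (f : ℝ → ℝ) (x : Fin 4 → ℝ) (i j k : Fin 4) :
    jac (Pw' α f) j i k x = - jac (Pw' α f) i j k x := by
  unfold jac
  rw [← Finset.sum_neg_distrib]
  refine Finset.sum_congr rfl fun l _ => ?_
  rw [fskewP α f i k, fskewP α f k j, fskewP α f j i]
  simp only [pd_fun_neg]
  ring

lemma jac_swap23 (α : ℝ) (f : ℝ → ℝ) (x : Fin 4 → ℝ) (i j k : Fin 4) :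
    jac (Pw' α f) i k j x = - jac (Pw' α f) i j k x := by
  unfold jac
  rw [← Finset.sum_neg_distrib]
  refine Finset.sum_congr rfl fun l _ => ?_
  rw [fskewP α f k j, fskewP α f j i, fskewP α f i k]
  simp only [pd_fun_neg]
  ring

lemma jac_diag (α : ℝ) (f : ℝ → ℝ) (x : Fin 4 → ℝ) (i k : Fin 4) :
    jac (Pw' α f) i i k x = 0 := by
  unfold jac
  refine Finset.sum_eq_zero fun l _ => ?_
  have hz : (fun y => Pw' α f y i i) = (fun _ => (0:ℝ)) := by
    funext y
    have := skewP α f y i i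
    linarith
  rw [fskewP α f i k]
  simp only [pd_fun_neg]
  rw [hz]
  have h0 : pd (fun _ => (0:ℝ)) l x = 0 := by
    have := (hasPD_const 0 x).pd_eq l; simpa using this
  rw [h0]
  ring

section
variable {α : ℝ} (hα : α ≠ 0) {f : ℝ → ℝ} (hf : ContDiff ℝ (⊤ : ℕ∞) f)
include hα hf

set_option maxHeartbeats 4000000 in
lemma jacCore012 (x : Fin 4 → ℝ) (hx : 0 < x 0) : jac (Pw' α f) 0 1 2 x = 0 := by
  have hev : ∀ᶠ y in nhds x, 0 < y 0 :=
    (isOpen_lt continuous_const (continuous_apply 0)).mem_nhds hx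
  have key : ∀ (a b : Fin 4), (fun y => Pw' α f y a b) =ᶠ[nhds x] (fun y => Emat α f y a b) :=
    fun a b => hev.mono fun y hy => by
      show Pw' α f y a b = Emat α f y a b
      rw [Pw'_eq hα hf y hy]
  have q12 : ∀ l, pd (fun y => Pw' α f y 1 2) l x = pd (E12 α f) l x := fun l => by
    rw [pd_congr (key 1 2) l]
    congr 1 <;> (funext y; simp [Emat])
  have q20 : ∀ l, pd (fun y => Pw' α f y 2 0) l x = -(pd (E02 α f) l x) := fun l => by
    rw [pd_congr (key 2 0) l]
    rw [show (fun y => Emat α f y 2 0) = (fun y => -(E02 α f y)) from funext fun y => by simp [Emat]]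
    rw [pd_fun_neg]
  have q01 : ∀ l, pd (fun y => Pw' α f y 0 1) l x = pd (E01 α f) l x := fun l => by
    rw [pd_congr (key 0 1) l]
    congr 1 <;> (funext y; simp [Emat])
  have vE01 := (hasPD_E01 hα hf hx).pd_eq
  have vE02 := (hasPD_E02 hα hf hx).pd_eq
  have vE12 := (hasPD_E12 hα hf hx).pd_eq
  unfold jac
  rw [Fin.sum_univ_four]
  rw [Pw'_eq hα hf x hx]
  simp only [q12, q20, q01]
  simp only [vE01, vE02, vE12]
  simp [Emat, E01, E02, E03, E12, E13, E23, G1, G2, Vw]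
  field_simp
  ring

set_option maxHeartbeats 4000000 in
lemma jacCore013 (x : Fin 4 → ℝ) (hx : 0 < x 0) : jac (Pw' α f) 0 1 3 x = 0 := by
  have hev : ∀ᶠ y in nhds x, 0 < y 0 :=
    (isOpen_lt continuous_const (continuous_apply 0)).mem_nhds hx
  have key : ∀ (a b : Fin 4), (fun y => Pw' α f y a b) =ᶠ[nhds x] (fun y => Emat α f y a b) :=
    fun a b => hev.mono fun y hy => by
      show Pw' α f y a b = Emat α f y a b
      rw [Pw'_eq hα hf y hy]
  have q13 : ∀ l, pd (fun y => Pw' α f y 1 3) l x = pd (E13 α f) l x := fun l => by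
    rw [pd_congr (key 1 3) l]
    congr 1 <;> (funext y; simp [Emat])
  have q30 : ∀ l, pd (fun y => Pw' α f y 3 0) l x = -(pd (E03 α f) l x) := fun l => by
    rw [pd_congr (key 3 0) l]
    rw [show (fun y => Emat α f y 3 0) = (fun y => -(E03 α f y)) from funext fun y => by simp [Emat]]
    rw [pd_fun_neg]
  have q01 : ∀ l, pd (fun y => Pw' α f y 0 1) l x = pd (E01 α f) l x := fun l => by
    rw [pd_congr (key 0 1) l]
    congr 1 <;> (funext y; simp [Emat])
  have vE01 := (hasPD_E01 hα hf hx).pd_eq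
  have vE03 := (hasPD_E03 hα hf hx).pd_eq
  have vE13 := (hasPD_E13 hα hf hx).pd_eq
  unfold jac
  rw [Fin.sum_univ_four]
  rw [Pw'_eq hα hf x hx]
  simp only [q13, q30, q01]
  simp only [vE01, vE03, vE13]
  simp [Emat, E01, E02, E03, E12, E13, E23, G1, G2, Vw]
  field_simp
  ring

set_option maxHeartbeats 4000000 in
lemma jacCore023 (x : Fin 4 → ℝ) (hx : 0 < x 0) : jac (Pw' α f) 0 2 3 x = 0 := by
  have hev : ∀ᶠ y in nhds x, 0 < y 0 :=
    (isOpen_lt continuous_const (continuous_apply 0)).mem_nhds hx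
  have key : ∀ (a b : Fin 4), (fun y => Pw' α f y a b) =ᶠ[nhds x] (fun y => Emat α f y a b) :=
    fun a b => hev.mono fun y hy => by
      show Pw' α f y a b = Emat α f y a b
      rw [Pw'_eq hα hf y hy]
  have q23 : ∀ l, pd (fun y => Pw' α f y 2 3) l x = pd (E23 α f) l x := fun l => by
    rw [pd_congr (key 2 3) l]
    congr 1 <;> (funext y; simp [Emat])
  have q30 : ∀ l, pd (fun y => Pw' α f y 3 0) l x = -(pd (E03 α f) l x) := fun l => by
    rw [pd_congr (key 3 0) l]
    rw [show (fun y => Emat α f y 3 0) = (fun y => -(E03 α f y)) from funext fun y => by simp [Emat]]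
    rw [pd_fun_neg]
  have q02 : ∀ l, pd (fun y => Pw' α f y 0 2) l x = pd (E02 α f) l x := fun l => by
    rw [pd_congr (key 0 2) l]
    congr 1 <;> (funext y; simp [Emat])
  have vE02 := (hasPD_E02 hα hf hx).pd_eq
  have vE03 := (hasPD_E03 hα hf hx).pd_eq
  have vE23 := (hasPD_E23 hα hf hx).pd_eq
  unfold jac
  rw [Fin.sum_univ_four]
  rw [Pw'_eq hα hf x hx]
  simp only [q23, q30, q02]
  simp only [vE02, vE03, vE23]
  simp [Emat, E01, E02, E03, E12, E13, E23, G1, G2, Vw]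
  field_simp
  ring

set_option maxHeartbeats 4000000 in
lemma jacCore123 (x : Fin 4 → ℝ) (hx : 0 < x 0) : jac (Pw' α f) 1 2 3 x = 0 := by
  have hev : ∀ᶠ y in nhds x, 0 < y 0 :=
    (isOpen_lt continuous_const (continuous_apply 0)).mem_nhds hx
  have key : ∀ (a b : Fin 4), (fun y => Pw' α f y a b) =ᶠ[nhds x] (fun y => Emat α f y a b) :=
    fun a b => hev.mono fun y hy => by
      show Pw' α f y a b = Emat α f y a b
      rw [Pw'_eq hα hf y hy]
  have q23 : ∀ l, pd (fun y => Pw' α f y 2 3) l x = pd (E23 α f) l x := fun l => by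
    rw [pd_congr (key 2 3) l]
    congr 1 <;> (funext y; simp [Emat])
  have q31 : ∀ l, pd (fun y => Pw' α f y 3 1) l x = -(pd (E13 α f) l x) := fun l => by
    rw [pd_congr (key 3 1) l]
    rw [show (fun y => Emat α f y 3 1) = (fun y => -(E13 α f y)) from funext fun y => by simp [Emat]]
    rw [pd_fun_neg]
  have q12 : ∀ l, pd (fun y => Pw' α f y 1 2) l x = pd (E12 α f) l x := fun l => by
    rw [pd_congr (key 1 2) l]
    congr 1 <;> (funext y; simp [Emat])
  have vE12 := (hasPD_E12 hα hf hx).pd_eq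
  have vE13 := (hasPD_E13 hα hf hx).pd_eq
  have vE23 := (hasPD_E23 hα hf hx).pd_eq
  unfold jac
  rw [Fin.sum_univ_four]
  rw [Pw'_eq hα hf x hx]
  simp only [q23, q31, q12]
  simp only [vE12, vE13, vE23]
  simp [Emat, E01, E02, E03, E12, E13, E23, G1, G2, Vw]
  field_simp
  ring

end

/-- for `V = q₁^{4/α} f(q₂/q₁)`, the bivector `P' = 2H·P + P̃`
satisfies the Jacobi identity on `{q₁ > 0}`. -/
theorem statement8 (α : ℝ) (hα : α ≠ 0) (f : ℝ → ℝ) (hf : ContDiff ℝ (⊤ : ℕ∞) f) :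
    ∀ x : Fin 4 → ℝ, 0 < x 0 →
      ∀ i j k : Fin 4, jac (Pw' α f) i j k x = 0 := by
  intro x hx i j k
  have S12 := jac_swap12 α f x
  have S23 := jac_swap23 α f x
  have Z1 := jac_diag α f x
  have Z2 : ∀ i j : Fin 4, jac (Pw' α f) i j j x = 0 := fun i j => by
    have := S23 i j j; linarith
  have Z3 : ∀ i j : Fin 4, jac (Pw' α f) i j i x = 0 := fun i j => by
    have h1 := S12 i j i
    have h2 := Z2 j i
    linarith
  have J012 := jacCore012 hα hf x hx
  have J013 := jacCore013 hα hf x hx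
  have J023 := jacCore023 hα hf x hx
  have J123 := jacCore123 hα hf x hx
  fin_cases i <;> fin_cases j <;> fin_cases k
  · exact Z1 _ _
  · exact Z1 _ _
  · exact Z1 _ _
  · exact Z1 _ _
  · exact Z3 _ _
  · exact Z2 _ _
  · exact J012
  · exact J013
  · exact Z3 _ _
  · exact (S23 0 1 2).trans (by rw [J012]; norm_num)
  · exact Z2 _ _
  · exact J023
  · exact Z3 _ _
  · exact (S23 0 1 3).trans (by rw [J013]; norm_num)
  · exact (S23 0 2 3).trans (by rw [J023]; norm_num)
  · exact Z2 _ _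
  · exact Z2 _ _
  · exact Z3 _ _
  · exact (S12 0 1 2).trans (by rw [J012]; norm_num)
  · exact (S12 0 1 3).trans (by rw [J013]; norm_num)
  · exact Z1 _ _
  · exact Z1 _ _
  · exact Z1 _ _
  · exact Z1 _ _
  · exact (S23 1 0 2).trans (by rw [S12 0 1 2, J012]; norm_num)
  · exact Z3 _ _
  · exact Z2 _ _
  · exact J123
  · exact (S23 1 0 3).trans (by rw [S12 0 1 3, J013]; norm_num)
  · exact Z3 _ _
  · exact (S23 1 2 3).trans (by rw [J123]; norm_num)
  · exact Z2 _ _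
  · exact Z2 _ _
  · exact (S12 0 2 1).trans (by rw [S23 0 1 2, J012]; norm_num)
  · exact Z3 _ _
  · exact (S12 0 2 3).trans (by rw [J023]; norm_num)
  · exact (S12 1 2 0).trans (by rw [S23 1 0 2, S12 0 1 2, J012]; norm_num)
  · exact Z2 _ _
  · exact Z3 _ _
  · exact (S12 1 2 3).trans (by rw [J123]; norm_num)
  · exact Z1 _ _
  · exact Z1 _ _
  · exact Z1 _ _
  · exact Z1 _ _
  · exact (S23 2 0 3).trans (by rw [S12 0 2 3, J023]; norm_num)
  · exact (S23 2 1 3).trans (by rw [S12 1 2 3, J123]; norm_num)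
  · exact Z3 _ _
  · exact Z2 _ _
  · exact Z2 _ _
  · exact (S12 0 3 1).trans (by rw [S23 0 1 3, J013]; norm_num)
  · exact (S12 0 3 2).trans (by rw [S23 0 2 3, J023]; norm_num)
  · exact Z3 _ _
  · exact (S12 1 3 0).trans (by rw [S23 1 0 3, S12 0 1 3, J013]; norm_num)
  · exact Z2 _ _
  · exact (S12 1 3 2).trans (by rw [S23 1 2 3, J123]; norm_num)
  · exact Z3 _ _
  · exact (S12 2 3 0).trans (by rw [S23 2 0 3, S12 0 2 3, J023]; norm_num)
  · exact (S12 2 3 1).trans (by rw [S23 2 1 3, S12 1 2 3, J123]; norm_num)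
  · exact Z2 _ _
  · exact Z3 _ _
  · exact Z1 _ _
  · exact Z1 _ _
  · exact Z1 _ _
  · exact Z1 _ _

end
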